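/- arXiv:1412.6487 — 3 statements merged into one kernel-verified Lean document; each statement's English description precedes it below -/
import Mathlib

section
/- Let g : ℝ^d → ℝ^d with g(x*) = 0, and suppose on B(x*, ε₁): (1) g' is Lipschitz with constant ω_L; (2) for a fixed α with 0 < α < α_M and a positive semidefinite matrix R, the matrix αR + g'(x) is invertible with ‖(αR + g'(x))⁻¹‖ ≤ M_I; (3) ‖(αR + g'(x))⁻¹(αR)‖ ≤ (α/β)/(1 + α/β) for some β > 0. Then for the iterate x⁺ = x − (αR + g'(x))⁻¹ g(x), the error e⁺ = x⁺ − x* satisfies ‖e⁺‖ ≤ ‖e‖ ( M_I (ω_L/2) ‖e‖ + 1/(1 + β/α) ), where e = x − x*. -/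
/-!
Since `B x` inverts `αR + g'(x)`, the error after the step splits as
`e⁺ = B x (αR e) + B x (g'(x) e - g x)`. The first term is controlled by the stability bound on
`B x ∘ αR`, the second by `‖B x‖ ≤ M_I` and the second-order Taylor estimate
`‖g x* - g x - g'(x)(x* - x)‖ ≤ ω_L/2 ‖x - x*‖²`, which follows from the Lipschitz bound on `g'`
by comparing `t ↦ g(x + t v) - g x - t g'(x) v` with `t ↦ ω_L/2 ‖v‖² t²` on `[0, 1]`.
-/

open Metric Set

theorem Convex.norm_image_sub_sub_fderiv_le {E F : Type*} [NormedAddCommGroup E] [NormedSpace ℝ E]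
    [NormedAddCommGroup F] [NormedSpace ℝ F] {g : E → F} {g' : E → E →L[ℝ] F} {s : Set E}
    {x y : E} {L : ℝ} (hs : Convex ℝ s) (hx : x ∈ s) (hy : y ∈ s)
    (hg : ∀ z ∈ s, HasFDerivWithinAt g (g' z) s z)
    (hLip : ∀ z ∈ s, ‖g' z - g' x‖ ≤ L * ‖z - x‖) :
    ‖g y - g x - g' x (y - x)‖ ≤ L / 2 * ‖y - x‖ ^ 2 := by
  set v := y - x
  have hpath : ∀ t ∈ Icc (0 : ℝ) 1, x + t • v ∈ s := fun t ht => by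
    simpa [v, sub_smul, one_smul, smul_sub] using hs.add_smul_sub_mem hx hy ht
  set φ : ℝ → F := fun t => g (x + t • v) - g x - t • g' x v
  have hφ : ∀ t ∈ Icc (0 : ℝ) 1,
      HasDerivWithinAt φ (g' (x + t • v) v - g' x v) (Icc 0 1) t := fun t ht => by
    have hline : HasDerivWithinAt (fun t : ℝ => x + t • v) v (Icc 0 1) t := by
      simpa using ((hasDerivAt_id t).smul_const v).const_add x |>.hasDerivWithinAt
    have hlin : HasDerivWithinAt (fun t : ℝ => t • g' x v) (g' x v) (Icc 0 1) t := by
      simpa using ((hasDerivAt_id t).smul_const (g' x v)).hasDerivWithinAt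
    exact (((hg _ (hpath t ht)).comp_hasDerivWithinAt t hline hpath).sub_const (g x)).sub hlin
  have hbound := image_norm_le_of_norm_deriv_right_le_deriv_boundary (f := φ)
    (B := fun t => L / 2 * ‖v‖ ^ 2 * t ^ 2) (B' := fun t => L * ‖v‖ ^ 2 * t)
    (fun t ht => (hφ t ht).continuousWithinAt)
    (fun t ht => (hφ t (Ico_subset_Icc_self ht)).mono_of_mem_nhdsWithin
      (Icc_mem_nhdsGE_of_mem ht))
    (by simp [φ])
    (fun t => ((hasDerivAt_pow 2 t).const_mul (L / 2 * ‖v‖ ^ 2)).congr_deriv (by ring))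
    (fun t ht => by
      have ht' := Ico_subset_Icc_self ht
      calc ‖g' (x + t • v) v - g' x v‖ = ‖(g' (x + t • v) - g' x) v‖ := rfl
        _ ≤ ‖g' (x + t • v) - g' x‖ * ‖v‖ := ContinuousLinearMap.le_opNorm _ _
        _ ≤ L * ‖t • v‖ * ‖v‖ := by
          gcongr
          simpa using hLip _ (hpath t ht')
        _ = L * ‖v‖ ^ 2 * t := by rw [norm_smul, Real.norm_of_nonneg ht.1]; ring)
    (right_mem_Icc.2 zero_le_one)
  simpa [φ, v] using hbound

theorem ContinuousLinearMap.norm_sub_apply_le_of_comp_add_eq_id {E : Type*}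
    [NormedAddCommGroup E] [NormedSpace ℝ E] {B S J : E →L[ℝ] E}
    (hB : B.comp (S + J) = ContinuousLinearMap.id ℝ E) (e r : E) :
    ‖e - B r‖ ≤ ‖B.comp S‖ * ‖e‖ + ‖B‖ * ‖J e - r‖ := by
  have hsplit : e - B r = B.comp S e + B (J e - r) := by
    conv_lhs => rw [← ContinuousLinearMap.id_apply (R₁ := ℝ) e, ← hB]
    simp only [comp_apply, _root_.add_apply, map_add, map_sub]
    abel
  rw [hsplit]
  exact (norm_add_le _ _).trans (add_le_add (le_opNorm _ _) (le_opNorm _ _))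

theorem stmt_4_general {d : ℕ}
    (g : EuclideanSpace ℝ (Fin d) → EuclideanSpace ℝ (Fin d))
    (g' : EuclideanSpace ℝ (Fin d) →
      (EuclideanSpace ℝ (Fin d) →L[ℝ] EuclideanSpace ℝ (Fin d)))
    (R : EuclideanSpace ℝ (Fin d) →L[ℝ] EuclideanSpace ℝ (Fin d))
    (B : EuclideanSpace ℝ (Fin d) →
      (EuclideanSpace ℝ (Fin d) →L[ℝ] EuclideanSpace ℝ (Fin d)))
    (xstar : EuclideanSpace ℝ (Fin d)) (ε₁ ωL α β MI : ℝ)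
    (hα : 0 < α) (hβ : 0 < β)
    (hdiff : ∀ y ∈ ball xstar ε₁, HasFDerivAt g (g' y) y)
    (hzero : g xstar = 0)
    (hLip : ∀ y ∈ ball xstar ε₁, ∀ z ∈ ball xstar ε₁, ‖g' y - g' z‖ ≤ ωL * ‖y - z‖)
    -- B y is the two-sided inverse of αR + g'(y):
    (hBl : ∀ y ∈ ball xstar ε₁, (B y).comp (α • R + g' y) = ContinuousLinearMap.id ℝ _)
    (hBbound : ∀ y ∈ ball xstar ε₁, ‖B y‖ ≤ MI)
    (hstab : ∀ y ∈ ball xstar ε₁, ‖(B y).comp (α • R)‖ ≤ (α / β) / (1 + α / β))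
    (x : EuclideanSpace ℝ (Fin d)) (hx : x ∈ ball xstar ε₁) :
    ‖(x - B x (g x)) - xstar‖ ≤
      ‖x - xstar‖ * (MI * (ωL / 2) * ‖x - xstar‖ + 1 / (1 + β / α)) := by
  have htaylor : ‖g' x (x - xstar) - g x‖ ≤ ωL / 2 * ‖x - xstar‖ ^ 2 := by
    have h := (convex_ball xstar ε₁).norm_image_sub_sub_fderiv_le hx (mem_ball_self
      (pos_of_mem_ball hx)) (fun z hz => (hdiff z hz).hasFDerivWithinAt)
      (fun z hz => hLip z hz x hx)
    rwa [hzero, ← neg_sub x xstar, map_neg, norm_neg,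
      show 0 - g x - -g' x (x - xstar) = g' x (x - xstar) - g x by abel] at h
  have hcontraction : (α / β) / (1 + α / β) = 1 / (1 + β / α) := by
    field_simp
    ring
  calc ‖(x - B x (g x)) - xstar‖ = ‖(x - xstar) - B x (g x)‖ := by rw [sub_right_comm]
    _ ≤ ‖(B x).comp (α • R)‖ * ‖x - xstar‖ + ‖B x‖ * ‖g' x (x - xstar) - g x‖ :=
      ContinuousLinearMap.norm_sub_apply_le_of_comp_add_eq_id (hBl x hx) _ _
    _ ≤ 1 / (1 + β / α) * ‖x - xstar‖ + MI * (ωL / 2 * ‖x - xstar‖ ^ 2) := by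
      rw [← hcontraction]
      gcongr
      · exact hstab x hx
      · exact (norm_nonneg _).trans (hBbound x hx)
      · exact hBbound x hx
    _ = ‖x - xstar‖ * (MI * (ωL / 2) * ‖x - xstar‖ + 1 / (1 + β / α)) := by ring

/-- Error bound for one regularized Newton step:
‖e⁺‖ ≤ ‖e‖ ( M_I (ω_L/2) ‖e‖ + 1/(1 + β/α) ). -/
theorem stmt_4 {d : ℕ}
    (g : EuclideanSpace ℝ (Fin d) → EuclideanSpace ℝ (Fin d))
    (g' : EuclideanSpace ℝ (Fin d) →
      (EuclideanSpace ℝ (Fin d) →L[ℝ] EuclideanSpace ℝ (Fin d)))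
    (R : EuclideanSpace ℝ (Fin d) →L[ℝ] EuclideanSpace ℝ (Fin d))
    (B : EuclideanSpace ℝ (Fin d) →
      (EuclideanSpace ℝ (Fin d) →L[ℝ] EuclideanSpace ℝ (Fin d)))
    (xstar : EuclideanSpace ℝ (Fin d)) (ε₁ ωL α αM β MI : ℝ)
    (hε₁ : 0 < ε₁) (hωL : 0 < ωL) (hα : 0 < α) (hαM : α < αM) (hβ : 0 < β) (hMI : 0 < MI)
    (hdiff : ∀ y ∈ ball xstar ε₁, HasFDerivAt g (g' y) y)
    (hzero : g xstar = 0)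
    (hRpsd : ∀ v : EuclideanSpace ℝ (Fin d), (0 : ℝ) ≤ inner ℝ v (R v))
    (hLip : ∀ y ∈ ball xstar ε₁, ∀ z ∈ ball xstar ε₁, ‖g' y - g' z‖ ≤ ωL * ‖y - z‖)
    -- B y is the two-sided inverse of αR + g'(y):
    (hBl : ∀ y ∈ ball xstar ε₁, (B y).comp (α • R + g' y) = ContinuousLinearMap.id ℝ _)
    (hBr : ∀ y ∈ ball xstar ε₁, (α • R + g' y).comp (B y) = ContinuousLinearMap.id ℝ _)
    (hBbound : ∀ y ∈ ball xstar ε₁, ‖B y‖ ≤ MI)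
    (hstab : ∀ y ∈ ball xstar ε₁, ‖(B y).comp (α • R)‖ ≤ (α / β) / (1 + α / β))
    (x : EuclideanSpace ℝ (Fin d)) (hx : x ∈ ball xstar ε₁) :
    ‖(x - B x (g x)) - xstar‖ ≤
      ‖x - xstar‖ * (MI * (ωL / 2) * ‖x - xstar‖ + 1 / (1 + β / α)) :=
  stmt_4_general g g' R B xstar ε₁ ωL α β MI hα hβ hdiff hzero hLip hBl hBbound hstab x hx
end

section
/- Under the residual convergence assumptions — g' Lipschitz with constant ω_L on a convex neighborhood containing x and x⁺ = x − (αR + g'(x))⁻¹ g(x), with ‖(αR + g'(x))⁻¹‖ ≤ M_I and ‖(αR)(αR + g'(x))⁻¹‖ ≤ (α/β_S)/(1 + α/β_S) — the residual satisfies ‖g(x⁺)‖ ≤ ‖g(x)‖ ( 1/(1 + β_S/α) + (ω_L M_I/2) ‖Δx‖ ), where Δx = x⁺ − x. -/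
/-!
Split `g (x + Δx) = (g x + g' x Δx) + (g (x + Δx) - g x - g' x Δx)`. Since
`(αR + g' x) B = 1` and `Δx = -B (g x)`, the linear part equals `(αR) B (g x)`, whose norm is at most
`‖g x‖ / (1 + βS / α)`. The Taylor remainder is at most `ωL / 2 * ‖Δx‖ ^ 2` because `g'` is
`ωL`-Lipschitz along the segment, and one factor `‖Δx‖ = ‖B (g x)‖` is bounded by `MI * ‖g x‖`.
-/

open Set

/-- The Lipschitz bound on `f'` makes the derivative of `t ↦ f (x + t • h) - t • f' x h` at most
`L * t * ‖h‖ ^ 2`, and `L / 2 * ‖h‖ ^ 2 * t ^ 2` is an antiderivative of that bound. -/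
theorem norm_image_sub_sub_fderiv_le_of_lipschitzOn_segment {E F : Type*}
    [NormedAddCommGroup E] [NormedSpace ℝ E] [NormedAddCommGroup F] [NormedSpace ℝ F]
    {f : E → F} {f' : E → E →L[ℝ] F} {x h : E} {L : ℝ}
    (hf : ∀ y ∈ segment ℝ x (x + h), HasFDerivAt f (f' y) y)
    (hLip : ∀ y ∈ segment ℝ x (x + h), ‖f' y - f' x‖ ≤ L * ‖y - x‖) :
    ‖f (x + h) - f x - f' x h‖ ≤ L / 2 * ‖h‖ ^ 2 := by
  have hmem : ∀ t ∈ Icc (0 : ℝ) 1, x + t • h ∈ segment ℝ x (x + h) := fun t ht => by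
    rw [segment_eq_image']
    exact ⟨t, ht, by simp⟩
  set φ : ℝ → F := fun t => f (x + t • h) - f x - t • f' x h
  have hφ : ∀ t ∈ Icc (0 : ℝ) 1, HasDerivAt φ (f' (x + t • h) h - f' x h) t := fun t ht => by
    have hline : HasDerivAt (fun t : ℝ => x + t • h) h t := by
      simpa using ((hasDerivAt_id t).smul_const h).const_add x
    exact ((((hf _ (hmem t ht)).comp_hasDerivAt t hline).sub_const (f x)).fun_sub
      ((hasDerivAt_id t).smul_const (f' x h))).congr_deriv (by rw [one_smul])
  have hbound : ∀ t ∈ Ico (0 : ℝ) 1,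
      ‖f' (x + t • h) h - f' x h‖ ≤ L / 2 * ‖h‖ ^ 2 * (2 * t) := fun t ht => by
    have hL := hLip _ (hmem t (Ico_subset_Icc_self ht))
    rw [add_sub_cancel_left, norm_smul, Real.norm_of_nonneg ht.1] at hL
    calc ‖f' (x + t • h) h - f' x h‖ = ‖(f' (x + t • h) - f' x) h‖ := rfl
      _ ≤ ‖f' (x + t • h) - f' x‖ * ‖h‖ := ContinuousLinearMap.le_opNorm _ _
      _ ≤ L * (t * ‖h‖) * ‖h‖ := by gcongr
      _ = L / 2 * ‖h‖ ^ 2 * (2 * t) := by ring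
  have key := image_norm_le_of_norm_deriv_right_le_deriv_boundary (a := 0) (b := 1) (f := φ)
    (B := fun t => L / 2 * ‖h‖ ^ 2 * t ^ 2)
    (fun t ht => (hφ t ht).continuousAt.continuousWithinAt)
    (fun t ht => (hφ t (Ico_subset_Icc_self ht)).hasDerivWithinAt)
    (by simp [φ]) (fun t => by simpa using (hasDerivAt_pow 2 t).const_mul (L / 2 * ‖h‖ ^ 2))
    hbound (right_mem_Icc.2 zero_le_one)
  simpa [φ] using key

theorem add_apply_neg_apply_of_add_comp_eq_id {E F : Type*}
    [NormedAddCommGroup E] [NormedSpace ℝ E] [NormedAddCommGroup F] [NormedSpace ℝ F]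
    {A J : E →L[ℝ] F} {B : F →L[ℝ] E} (hB : (A + J).comp B = ContinuousLinearMap.id ℝ F)
    (r : F) : r + J (-B r) = A (B r) := by
  have hr : A (B r) + J (B r) = r := by simpa using congrArg (fun T => T r) hB
  rw [map_neg, ← sub_eq_add_neg, sub_eq_iff_eq_add]
  exact hr.symm

theorem div_div_one_add_div_eq {a b : ℝ} (ha : 0 < a) (hb : 0 < b) :
    a / b / (1 + a / b) = 1 / (1 + b / a) := by
  field_simp
  ring

theorem stmt_11_general {d : ℕ}
    (g : EuclideanSpace ℝ (Fin d) → EuclideanSpace ℝ (Fin d))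
    (g' : EuclideanSpace ℝ (Fin d) →
      (EuclideanSpace ℝ (Fin d) →L[ℝ] EuclideanSpace ℝ (Fin d)))
    (R : EuclideanSpace ℝ (Fin d) →L[ℝ] EuclideanSpace ℝ (Fin d))
    (B : EuclideanSpace ℝ (Fin d) →L[ℝ] EuclideanSpace ℝ (Fin d))
    (α βS MI ωL : ℝ) (hα : 0 < α) (hβS : 0 < βS) (hωL : 0 < ωL)
    (hdiff : ∀ y, HasFDerivAt g (g' y) y)
    (x Δx : EuclideanSpace ℝ (Fin d))
    (s : Set (EuclideanSpace ℝ (Fin d)))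
    (hseg : segment ℝ x (x + Δx) ⊆ s)
    (hLip : ∀ y ∈ s, ∀ z ∈ s, ‖g' y - g' z‖ ≤ ωL * ‖y - z‖)
    (hBr : (α • R + g' x).comp B = ContinuousLinearMap.id ℝ _)
    (hBbound : ‖B‖ ≤ MI)
    (hstab : ‖(α • R).comp B‖ ≤ (α / βS) / (1 + α / βS))
    (hΔx : Δx = -(B (g x))) :
    ‖g (x + Δx)‖ ≤ ‖g x‖ * (1 / (1 + βS / α) + (ωL * MI / 2) * ‖Δx‖) := by
  have hremainder : ‖g (x + Δx) - g x - g' x Δx‖ ≤ ωL / 2 * ‖Δx‖ ^ 2 :=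
    norm_image_sub_sub_fderiv_le_of_lipschitzOn_segment (fun y _ => hdiff y)
      fun y hy => hLip y (hseg hy) x (hseg (left_mem_segment ℝ x _))
  have hlinear : ‖g x + g' x Δx‖ ≤ 1 / (1 + βS / α) * ‖g x‖ := by
    rw [hΔx, add_apply_neg_apply_of_add_comp_eq_id hBr, ← div_div_one_add_div_eq hα hβS]
    exact ((α • R).comp B).le_of_opNorm_le hstab _
  have hstep : ‖Δx‖ ≤ MI * ‖g x‖ := by
    rw [hΔx, norm_neg]
    exact B.le_of_opNorm_le hBbound _
  calc ‖g (x + Δx)‖ = ‖(g x + g' x Δx) + (g (x + Δx) - g x - g' x Δx)‖ := by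
        congr 1; abel
    _ ≤ 1 / (1 + βS / α) * ‖g x‖ + ωL / 2 * ‖Δx‖ ^ 2 :=
        (norm_add_le _ _).trans (add_le_add hlinear hremainder)
    _ ≤ 1 / (1 + βS / α) * ‖g x‖ + ωL / 2 * (MI * ‖g x‖ * ‖Δx‖) := by
        rw [sq]; gcongr
    _ = ‖g x‖ * (1 / (1 + βS / α) + (ωL * MI / 2) * ‖Δx‖) := by ring

/-- Residual bound: ‖g(x⁺)‖ ≤ ‖g(x)‖ ( 1/(1 + β_S/α) + (ω_L M_I/2)‖Δx‖ ). -/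
theorem stmt_11 {d : ℕ}
    (g : EuclideanSpace ℝ (Fin d) → EuclideanSpace ℝ (Fin d))
    (g' : EuclideanSpace ℝ (Fin d) →
      (EuclideanSpace ℝ (Fin d) →L[ℝ] EuclideanSpace ℝ (Fin d)))
    (R : EuclideanSpace ℝ (Fin d) →L[ℝ] EuclideanSpace ℝ (Fin d))
    (B : EuclideanSpace ℝ (Fin d) →L[ℝ] EuclideanSpace ℝ (Fin d))
    (α βS MI ωL : ℝ) (hα : 0 < α) (hβS : 0 < βS) (hMI : 0 < MI) (hωL : 0 < ωL)
    (hdiff : ∀ y, HasFDerivAt g (g' y) y) (hcont : Continuous g')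
    (hRpsd : ∀ v : EuclideanSpace ℝ (Fin d), (0 : ℝ) ≤ inner ℝ v (R v))
    (x Δx : EuclideanSpace ℝ (Fin d))
    (s : Set (EuclideanSpace ℝ (Fin d))) (hsOpen : IsOpen s) (hsConv : Convex ℝ s)
    (hseg : segment ℝ x (x + Δx) ⊆ s)
    (hLip : ∀ y ∈ s, ∀ z ∈ s, ‖g' y - g' z‖ ≤ ωL * ‖y - z‖)
    (hBl : B.comp (α • R + g' x) = ContinuousLinearMap.id ℝ _)
    (hBr : (α • R + g' x).comp B = ContinuousLinearMap.id ℝ _)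
    (hBbound : ‖B‖ ≤ MI)
    (hstab : ‖(α • R).comp B‖ ≤ (α / βS) / (1 + α / βS))
    (hΔx : Δx = -(B (g x))) :
    ‖g (x + Δx)‖ ≤ ‖g x‖ * (1 / (1 + βS / α) + (ωL * MI / 2) * ‖Δx‖) :=
  stmt_11_general g g' R B α βS MI ωL hα hβS hωL hdiff x Δx s hseg hLip hBr hBbound hstab hΔx
end

section
/- Under the residual convergence assumptions, ‖g(x⁺)‖ ≤ C_B ‖g(x)‖ ( ‖g(x)‖ + (α/β_S)(1/C_B) ) where C_B = ω_L M_I²/2 and x⁺ = x − (αR + g'(x))⁻¹ g(x). -/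
/-! Split `g x⁺` into the Taylor remainder `g x⁺ - g x - g' x Δx`, which the Lipschitz bound on
`g'` makes at most `ω_L/2 ‖Δx‖² ≤ ω_L M_I²/2 ‖g x‖²`, and the linear part
`g x + g' x Δx = (αR)(αR + g' x)⁻¹ g x`, which the stability bound makes at most `(α/β_S) ‖g x‖`. -/

open Set

theorem norm_sub_sub_fderiv_le_of_lipschitz_on_segment
    {E F : Type*} [NormedAddCommGroup E] [NormedSpace ℝ E]
    [NormedAddCommGroup F] [NormedSpace ℝ F]
    {f : E → F} {f' : E → E →L[ℝ] F} {x h : E} {L : ℝ}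
    (hf : ∀ y ∈ segment ℝ x (x + h), HasFDerivAt f (f' y) y)
    (hf' : ∀ y ∈ segment ℝ x (x + h), ‖f' y - f' x‖ ≤ L * ‖y - x‖) :
    ‖f (x + h) - f x - f' x h‖ ≤ L / 2 * ‖h‖ ^ 2 := by
  have hmem : ∀ t ∈ Icc (0 : ℝ) 1, x + t • h ∈ segment ℝ x (x + h) := fun t ht => by
    rw [segment_eq_image']
    exact ⟨t, ht, by rw [add_sub_cancel_left]⟩
  have hderiv : ∀ t ∈ Icc (0 : ℝ) 1, HasDerivAt (fun t : ℝ => f (x + t • h) - f x - t • f' x h)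
      (f' (x + t • h) h - f' x h) t := fun t ht => by
    have hline : HasDerivAt (fun t : ℝ => x + t • h) h t := by
      simpa using ((hasDerivAt_id t).smul_const h).const_add x
    simpa using (((hf _ (hmem t ht)).comp_hasDerivAt t hline).sub_const (f x)).fun_sub
      ((hasDerivAt_id t).smul_const (f' x h))
  have hbound : ∀ t ∈ Ico (0 : ℝ) 1, ‖f' (x + t • h) h - f' x h‖ ≤ L * t * ‖h‖ ^ 2 :=
    fun t ht => calc
      ‖f' (x + t • h) h - f' x h‖ ≤ ‖f' (x + t • h) - f' x‖ * ‖h‖ := by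
        exact (f' (x + t • h) - f' x).le_opNorm h
      _ ≤ L * ‖t • h‖ * ‖h‖ := by
        gcongr
        simpa using hf' _ (hmem t (Ico_subset_Icc_self ht))
      _ = L * t * ‖h‖ ^ 2 := by
        rw [norm_smul, Real.norm_of_nonneg ht.1]; ring
  have key := image_norm_le_of_norm_deriv_right_le_deriv_boundary
    (B := fun t => L / 2 * ‖h‖ ^ 2 * t ^ 2) (B' := fun t => L * t * ‖h‖ ^ 2)
    (fun t ht => (hderiv t ht).continuousAt.continuousWithinAt)
    (fun t ht => (hderiv t (Ico_subset_Icc_self ht)).hasDerivWithinAt)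
    (by simp) (fun t => ((hasDerivAt_pow 2 t).const_mul _).congr_deriv (by ring)) hbound
    (right_mem_Icc.2 zero_le_one)
  simpa using key

theorem self_add_apply_neg_eq_of_add_comp_eq_id {R M : Type*} [Ring R] [TopologicalSpace M]
    [AddCommGroup M] [IsTopologicalAddGroup M] [Module R M] {A J B : M →L[R] M}
    (hB : (A + J).comp B = ContinuousLinearMap.id R M) (v : M) :
    v + J (-(B v)) = A (B v) := by
  have hv : A (B v) + J (B v) = v := by simpa using congrArg (· v) hB
  rw [map_neg, ← sub_eq_add_neg, sub_eq_iff_eq_add, hv]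

theorem stmt_12_general {d : ℕ}
    (g : EuclideanSpace ℝ (Fin d) → EuclideanSpace ℝ (Fin d))
    (g' : EuclideanSpace ℝ (Fin d) →
      (EuclideanSpace ℝ (Fin d) →L[ℝ] EuclideanSpace ℝ (Fin d)))
    (R : EuclideanSpace ℝ (Fin d) →L[ℝ] EuclideanSpace ℝ (Fin d))
    (B : EuclideanSpace ℝ (Fin d) →L[ℝ] EuclideanSpace ℝ (Fin d))
    (α βS MI ωL : ℝ) (hα : 0 < α) (hβS : 0 < βS) (hMI : 0 < MI) (hωL : 0 < ωL)
    (hdiff : ∀ y, HasFDerivAt g (g' y) y)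
    (x Δx : EuclideanSpace ℝ (Fin d))
    (s : Set (EuclideanSpace ℝ (Fin d)))
    (hseg : segment ℝ x (x + Δx) ⊆ s)
    (hLip : ∀ y ∈ s, ∀ z ∈ s, ‖g' y - g' z‖ ≤ ωL * ‖y - z‖)
    (hBr : (α • R + g' x).comp B = ContinuousLinearMap.id ℝ _)
    (hBbound : ‖B‖ ≤ MI)
    (hstab : ‖(α • R).comp B‖ ≤ (α / βS) / (1 + α / βS))
    (hΔx : Δx = -(B (g x))) :
    ‖g (x + Δx)‖ ≤ (ωL * MI ^ 2 / 2) * ‖g x‖ * (‖g x‖ + (α / βS) * (1 / (ωL * MI ^ 2 / 2))) := by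
  have hrem : ‖g (x + Δx) - g x - g' x Δx‖ ≤ ωL / 2 * ‖Δx‖ ^ 2 :=
    norm_sub_sub_fderiv_le_of_lipschitz_on_segment (fun y _ => hdiff y)
      (fun y hy => hLip y (hseg hy) x (hseg (left_mem_segment ℝ x _)))
  have hstep : ‖Δx‖ ≤ MI * ‖g x‖ := by
    rw [hΔx, norm_neg]
    exact B.le_of_opNorm_le hBbound _
  have hlin : ‖g x + g' x Δx‖ ≤ α / βS * ‖g x‖ := by
    rw [hΔx, self_add_apply_neg_eq_of_add_comp_eq_id hBr, ← ContinuousLinearMap.comp_apply]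
    refine ((α • R).comp B).le_of_opNorm_le (hstab.trans ?_) _
    exact div_le_self (by positivity) (le_add_of_nonneg_right (by positivity))
  calc ‖g (x + Δx)‖ = ‖(g (x + Δx) - g x - g' x Δx) + (g x + g' x Δx)‖ := by
        congr 1; abel
    _ ≤ ωL / 2 * ‖Δx‖ ^ 2 + α / βS * ‖g x‖ := (norm_add_le _ _).trans (add_le_add hrem hlin)
    _ ≤ ωL / 2 * (MI * ‖g x‖) ^ 2 + α / βS * ‖g x‖ := by gcongr
    _ = (ωL * MI ^ 2 / 2) * ‖g x‖ * (‖g x‖ + (α / βS) * (1 / (ωL * MI ^ 2 / 2))) := by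
        field_simp

/-- Residual bound: ‖g(x⁺)‖ ≤ C_B ‖g(x)‖ ( ‖g(x)‖ + (α/β_S)(1/C_B) ), C_B = ω_L M_I²/2. -/
theorem stmt_12 {d : ℕ}
    (g : EuclideanSpace ℝ (Fin d) → EuclideanSpace ℝ (Fin d))
    (g' : EuclideanSpace ℝ (Fin d) →
      (EuclideanSpace ℝ (Fin d) →L[ℝ] EuclideanSpace ℝ (Fin d)))
    (R : EuclideanSpace ℝ (Fin d) →L[ℝ] EuclideanSpace ℝ (Fin d))
    (B : EuclideanSpace ℝ (Fin d) →L[ℝ] EuclideanSpace ℝ (Fin d))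
    (α βS MI ωL : ℝ) (hα : 0 < α) (hβS : 0 < βS) (hMI : 0 < MI) (hωL : 0 < ωL)
    (hdiff : ∀ y, HasFDerivAt g (g' y) y) (hcont : Continuous g')
    (hRpsd : ∀ v : EuclideanSpace ℝ (Fin d), (0 : ℝ) ≤ inner ℝ v (R v))
    (x Δx : EuclideanSpace ℝ (Fin d))
    (s : Set (EuclideanSpace ℝ (Fin d))) (hsOpen : IsOpen s) (hsConv : Convex ℝ s)
    (hseg : segment ℝ x (x + Δx) ⊆ s)
    (hLip : ∀ y ∈ s, ∀ z ∈ s, ‖g' y - g' z‖ ≤ ωL * ‖y - z‖)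
    (hBl : B.comp (α • R + g' x) = ContinuousLinearMap.id ℝ _)
    (hBr : (α • R + g' x).comp B = ContinuousLinearMap.id ℝ _)
    (hBbound : ‖B‖ ≤ MI)
    (hstab : ‖(α • R).comp B‖ ≤ (α / βS) / (1 + α / βS))
    (hΔx : Δx = -(B (g x))) :
    ‖g (x + Δx)‖ ≤ (ωL * MI ^ 2 / 2) * ‖g x‖ * (‖g x‖ + (α / βS) * (1 / (ωL * MI ^ 2 / 2))) :=
  stmt_12_general g g' R B α βS MI ωL hα hβS hMI hωL hdiff x Δx s hseg hLip hBr hBbound hstab hΔx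
end
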